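/- Suppose ρ is strongly convex with modulus C > 0 (i.e. ψ'(x) ≥ C for all x), and suppose λ_min(Σ̂) > 0 where Σ̂ = (1/n) Σᵢ Xᵢ Xᵢᵀ. Let β̂ be the unpenalized M-estimator, satisfying Σᵢ Xᵢ ψ(εᵢ − Xᵢᵀβ̂) = 0, and let β̂_τ be the ridge-penalized M-estimator, the minimizer of (1/n) Σᵢ ρ(εᵢ − Xᵢᵀβ) + (τ/2)‖β‖² for τ > 0. Then ‖β̂_τ − β̂‖ ≤ (τ/(C·λ_min(Σ̂) + τ))·‖β̂‖, ‖β̂_τ − β̂‖ ≤ (τ/(C·λ_min(Σ̂)))·‖β̂_τ‖, and consequently ‖β̂_τ − β̂‖ ≤ (√(2τ)/(C·λ_min(Σ̂)))·√((1/n) Σᵢ ρ(εᵢ)). -/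

import Mathlib

/-!
Write `D = β̂_τ - β̂`. Pairing the first-order conditions of the two estimators with `D` and
using `(ψ b - ψ a)(b - a) ≥ C (b - a)²` gives `C λ_min ‖D‖² ≤ C Dᵀ Σ̂ D ≤ -τ ⟪β̂_τ, D⟫`.
Cauchy–Schwarz then gives the second bound, and, after writing
`⟪β̂_τ, D⟫ = ⟪β̂, D⟫ + ‖D‖²`, the first. Comparing the objective at `β̂_τ` and at `0` gives
`(τ/2) ‖β̂_τ‖² ≤ (1/n) Σᵢ ρ(εᵢ)`, which turns the second bound into the third.
-/

noncomputable section

open scoped BigOperators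

/-- Residual `ε j - Xⱼᵀβ`. -/
def resid {p n : ℕ} (X : Fin n → EuclideanSpace ℝ (Fin p)) (ε : Fin n → ℝ)
    (β : EuclideanSpace ℝ (Fin p)) (j : Fin n) : ℝ :=
  ε j - ∑ k, X j k * β k

/-- The ridge-regularized objective `F(β) = (1/n) Σᵢ ρ(εᵢ - Xᵢᵀβ) + (τ/2)‖β‖²`. -/
def Fobj {p n : ℕ} (ρ : ℝ → ℝ) (τ : ℝ) (X : Fin n → EuclideanSpace ℝ (Fin p))
    (ε : Fin n → ℝ) (β : EuclideanSpace ℝ (Fin p)) : ℝ :=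
  (1 / (n : ℝ)) * ∑ i, ρ (ε i - ∑ k, X i k * β k) + (τ / 2) * ‖β‖ ^ 2

/-- The sample covariance matrix `Σ̂ = (1/n) Σᵢ Xᵢ Xᵢᵀ`. -/
def sigmaHat {p n : ℕ} (X : Fin n → EuclideanSpace ℝ (Fin p)) :
    Matrix (Fin p) (Fin p) ℝ :=
  (1 / (n : ℝ)) • ∑ i, Matrix.vecMulVec (fun k => X i k) (fun k => X i k)

open scoped RealInnerProductSpace

theorem Matrix.IsHermitian.iInf_eigenvalues_mul_norm_sq_le {ι : Type*} [Fintype ι] [DecidableEq ι]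
    {A : Matrix ι ι ℝ} (hA : A.IsHermitian) (x : EuclideanSpace ℝ ι) :
    (⨅ j, hA.eigenvalues j) * ‖x‖ ^ 2 ≤ ⟪x, A.toEuclideanLin x⟫ := by
  set b := hA.eigenvectorBasis
  have hb (j : ι) : A.toEuclideanLin (b j) = hA.eigenvalues j • b j := by
    ext k
    exact congrFun (hA.mulVec_eigenvectorBasis j) k
  have hquad : ⟪x, A.toEuclideanLin x⟫ = ∑ j, hA.eigenvalues j * ⟪b j, x⟫ ^ 2 := by
    rw [← b.sum_inner_mul_inner]
    refine Finset.sum_congr rfl fun j _ => ?_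
    rw [← Matrix.isSymmetric_toEuclideanLin_iff.mpr hA, hb, real_inner_smul_left,
      real_inner_comm x]
    ring
  have hnorm : ‖x‖ ^ 2 = ∑ j, ⟪b j, x⟫ ^ 2 := by
    rw [← real_inner_self_eq_norm_sq, ← b.sum_inner_mul_inner]
    simp only [real_inner_comm x, sq]
  rw [hquad, hnorm, Finset.mul_sum]
  exact Finset.sum_le_sum fun j _ =>
    mul_le_mul_of_nonneg_right (ciInf_le (Set.finite_range _).bddBelow j) (sq_nonneg _)

theorem mul_sq_le_sub_mul_sub_of_le_deriv {f : ℝ → ℝ} (hf : Differentiable ℝ f) {C : ℝ}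
    (hf' : ∀ x, C ≤ deriv f x) (x y : ℝ) : C * (y - x) ^ 2 ≤ (f y - f x) * (y - x) := by
  rcases le_total x y with hxy | hyx
  · nlinarith [mul_sub_le_image_sub_of_le_deriv hf hf' hxy]
  · nlinarith [mul_sub_le_image_sub_of_le_deriv hf hf' hyx]

theorem norm_le_div_mul_norm_of_mul_norm_sq_le_neg_inner {E : Type*} [NormedAddCommGroup E]
    [InnerProductSpace ℝ E] {b d : E} {c τ : ℝ} (hc : 0 < c) (hτ : 0 ≤ τ)
    (h : c * ‖d‖ ^ 2 ≤ -(τ * ⟪b, d⟫)) : ‖d‖ ≤ τ / c * ‖b‖ := by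
  have hcs : -(τ * ⟪b, d⟫) ≤ τ * (‖b‖ * ‖d‖) := by
    nlinarith [neg_abs_le ⟪b, d⟫, abs_real_inner_le_norm b d]
  rw [div_mul_eq_mul_div, le_div_iff₀ hc]
  rcases (norm_nonneg d).eq_or_lt with hd | hd
  · rw [← hd, zero_mul]; positivity
  · nlinarith

section Estimator

variable {p n : ℕ} {ρ : ℝ → ℝ} (τ : ℝ) (X : Fin n → EuclideanSpace ℝ (Fin p)) (ε : Fin n → ℝ)

theorem resid_eq_sub_inner (β : EuclideanSpace ℝ (Fin p)) (i : Fin n) :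
    resid X ε β i = ε i - ⟪X i, β⟫ := by
  simp [resid, EuclideanSpace.inner_eq_star_dotProduct, dotProduct, mul_comm]

theorem Fobj_eq (β : EuclideanSpace ℝ (Fin p)) :
    Fobj ρ τ X ε β = (1 / (n : ℝ)) * ∑ i, ρ (ε i - ⟪X i, β⟫) + τ / 2 * ‖β‖ ^ 2 := by
  simp only [Fobj, ← resid_eq_sub_inner, resid]

theorem hasFDerivAt_Fobj (hρ : Differentiable ℝ ρ) (β : EuclideanSpace ℝ (Fin p)) :
    HasFDerivAt (Fobj ρ τ X ε)
      ((1 / (n : ℝ)) • ∑ i, (-deriv ρ (resid X ε β i)) • innerSL ℝ (X i)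
        + (τ / 2) • (2 • innerSL ℝ β)) β := by
  have hres (i : Fin n) : HasFDerivAt (fun β => ρ (ε i - ⟪X i, β⟫))
      ((-deriv ρ (resid X ε β i)) • innerSL ℝ (X i)) β := by
    have := (hρ (resid X ε β i)).hasDerivAt.comp_hasFDerivAt_of_eq β
      ((innerSL ℝ (X i)).hasFDerivAt.const_sub (ε i)) (resid_eq_sub_inner X ε β i)
    simpa only [Function.comp_def, neg_smul, smul_neg, coe_innerSL_apply] using this
  have := ((HasFDerivAt.fun_sum (u := Finset.univ) fun i _ => hres i).const_mul (1 / (n : ℝ))).add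
    ((hasStrictFDerivAt_norm_sq β).hasFDerivAt.const_mul (τ / 2))
  rwa [show Fobj ρ τ X ε = _ from funext (Fobj_eq τ X ε)]

theorem mul_inner_eq_of_forall_Fobj_le (hρ : Differentiable ℝ ρ)
    {β : EuclideanSpace ℝ (Fin p)} (hβ : ∀ β', Fobj ρ τ X ε β ≤ Fobj ρ τ X ε β')
    (v : EuclideanSpace ℝ (Fin p)) :
    τ * ⟪β, v⟫ = (1 / (n : ℝ)) * ∑ i, deriv ρ (resid X ε β i) * ⟪X i, v⟫ := by
  have hmin : IsLocalMin (Fobj ρ τ X ε) β := Filter.Eventually.of_forall hβ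
  have h := congrArg (· v) (hmin.hasFDerivAt_eq_zero (hasFDerivAt_Fobj τ X ε hρ β))
  simp only [neg_smul, Finset.sum_neg_distrib, smul_neg, add_apply, neg_apply, smul_apply,
    sum_apply, coe_innerSL_apply, smul_eq_mul, nsmul_eq_mul, Nat.cast_ofNat, zero_apply] at h
  linarith

theorem mul_norm_le_sqrt_of_forall_Fobj_le (hρ : ∀ x, 0 ≤ ρ x) (hτ : 0 < τ)
    {β : EuclideanSpace ℝ (Fin p)} (hβ : ∀ β', Fobj ρ τ X ε β ≤ Fobj ρ τ X ε β') :
    τ * ‖β‖ ≤ √(2 * τ) * √((1 / (n : ℝ)) * ∑ i, ρ (ε i)) := by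
  have hfit : 0 ≤ (1 / (n : ℝ)) * ∑ i, ρ (ε i - ∑ k, X i k * β k) := by
    have := Finset.sum_nonneg fun i (_ : i ∈ Finset.univ) => hρ (ε i - ∑ k, X i k * β k)
    positivity
  have hzero : Fobj ρ τ X ε 0 = (1 / (n : ℝ)) * ∑ i, ρ (ε i) := by simp [Fobj]
  have hpen : τ / 2 * ‖β‖ ^ 2 ≤ (1 / (n : ℝ)) * ∑ i, ρ (ε i) := by
    have := hβ 0
    rw [hzero, Fobj] at this
    linarith
  have hβ2 : 0 ≤ τ / 2 * ‖β‖ ^ 2 := by positivity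
  rw [← Real.sqrt_mul (by positivity), Real.le_sqrt (by positivity) (by nlinarith)]
  nlinarith

theorem inner_sigmaHat_self (x : EuclideanSpace ℝ (Fin p)) :
    ⟪x, (sigmaHat X).toEuclideanLin x⟫ = (1 / (n : ℝ)) * ∑ i, ⟪X i, x⟫ ^ 2 := by
  simp [sigmaHat, Matrix.toLpLin_apply, EuclideanSpace.inner_eq_star_dotProduct,
    Matrix.vecMulVec_mulVec, sum_dotProduct, smul_dotProduct, Finset.mul_sum,
    dotProduct_comm x.ofLp, sq]

theorem mul_mean_inner_sq_le_neg_mul_inner {C : ℝ} (hρ : Differentiable ℝ ρ)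
    (hψ : Differentiable ℝ (deriv ρ)) (hstrong : ∀ x, C ≤ deriv (deriv ρ) x)
    {βhat βτ : EuclideanSpace ℝ (Fin p)}
    (hβhat : ∑ i, deriv ρ (resid X ε βhat i) • X i = 0)
    (hβτ : ∀ β, Fobj ρ τ X ε βτ ≤ Fobj ρ τ X ε β) :
    C * ((1 / (n : ℝ)) * ∑ i, ⟪X i, βτ - βhat⟫ ^ 2) ≤ -(τ * ⟪βτ, βτ - βhat⟫) := by
  set D := βτ - βhat
  have hhat : ∑ i, deriv ρ (resid X ε βhat i) * ⟪X i, D⟫ = 0 := by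
    simpa [sum_inner, real_inner_smul_left] using congrArg (⟪·, D⟫) hβhat
  have hmono (i : Fin n) : C * ⟪X i, D⟫ ^ 2 ≤
      deriv ρ (resid X ε βhat i) * ⟪X i, D⟫ - deriv ρ (resid X ε βτ i) * ⟪X i, D⟫ := by
    have hres : resid X ε βhat i - resid X ε βτ i = ⟪X i, D⟫ := by
      simp only [resid_eq_sub_inner, D, inner_sub_right]
      ring
    have := mul_sq_le_sub_mul_sub_of_le_deriv hψ hstrong (resid X ε βτ i) (resid X ε βhat i)
    rw [hres] at this
    linarith
  have hsum := Finset.sum_le_sum fun i (_ : i ∈ Finset.univ) => hmono i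
  rw [← Finset.mul_sum, Finset.sum_sub_distrib, hhat] at hsum
  rw [mul_inner_eq_of_forall_Fobj_le τ X ε hρ hβτ D]
  have hn : 0 ≤ 1 / (n : ℝ) := by positivity
  nlinarith

end Estimator

theorem statement18_general {p n : ℕ} (ρ : ℝ → ℝ) (τ C : ℝ) (hτ : 0 < τ) (hC : 0 < C)
    (hρsmooth : ContDiff ℝ 2 ρ)
    (hρnonneg : ∀ x, 0 ≤ ρ x)
    -- ρ strongly convex with modulus C: ψ'(x) ≥ C for all x
    (hstrong : ∀ x : ℝ, C ≤ deriv (deriv ρ) x)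
    (X : Fin n → EuclideanSpace ℝ (Fin p)) (ε : Fin n → ℝ)
    (hher : (sigmaHat X).IsHermitian)
    -- λ_min(Σ̂) > 0
    (hlmin : 0 < ⨅ j, hher.eigenvalues j)
    -- β̂ : the unpenalized M-estimator, Σᵢ Xᵢ ψ(εᵢ - Xᵢᵀβ̂) = 0
    (βhat : EuclideanSpace ℝ (Fin p))
    (hβhat : ∑ i, deriv ρ (resid X ε βhat i) • X i = (0 : EuclideanSpace ℝ (Fin p)))
    -- β̂_τ : the ridge-penalized M-estimator (minimizer of the penalized objective)
    (βτ : EuclideanSpace ℝ (Fin p))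
    (hβτ : ∀ β, Fobj ρ τ X ε βτ ≤ Fobj ρ τ X ε β) :
    ‖βτ - βhat‖ ≤ (τ / (C * (⨅ j, hher.eigenvalues j) + τ)) * ‖βhat‖ ∧
    ‖βτ - βhat‖ ≤ (τ / (C * (⨅ j, hher.eigenvalues j))) * ‖βτ‖ ∧
    ‖βτ - βhat‖ ≤ (Real.sqrt (2 * τ) / (C * (⨅ j, hher.eigenvalues j))) *
      Real.sqrt ((1 / (n : ℝ)) * ∑ i, ρ (ε i)) := by
  set lam := ⨅ j, hher.eigenvalues j
  have hClam : 0 < C * lam := mul_pos hC hlmin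
  have hkey : C * lam * ‖βτ - βhat‖ ^ 2 ≤ -(τ * ⟪βτ, βτ - βhat⟫) :=
    calc C * lam * ‖βτ - βhat‖ ^ 2 = C * (lam * ‖βτ - βhat‖ ^ 2) := mul_assoc _ _ _
      _ ≤ C * ((1 / (n : ℝ)) * ∑ i, ⟪X i, βτ - βhat⟫ ^ 2) := by
        rw [← inner_sigmaHat_self]
        exact mul_le_mul_of_nonneg_left (hher.iInf_eigenvalues_mul_norm_sq_le _) hC.le
      _ ≤ -(τ * ⟪βτ, βτ - βhat⟫) :=
        mul_mean_inner_sq_le_neg_mul_inner τ X ε (hρsmooth.differentiable (by norm_num))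
          hρsmooth.differentiable_deriv_two hstrong hβhat hβτ
  have hβτ_bound := norm_le_div_mul_norm_of_mul_norm_sq_le_neg_inner hClam hτ.le hkey
  refine ⟨norm_le_div_mul_norm_of_mul_norm_sq_le_neg_inner (by positivity) hτ.le ?_,
    hβτ_bound, ?_⟩
  · have hsplit : ⟪βτ, βτ - βhat⟫ = ⟪βhat, βτ - βhat⟫ + ‖βτ - βhat‖ ^ 2 := by
      rw [← real_inner_self_eq_norm_sq, ← inner_add_left, add_sub_cancel]
    rw [hsplit] at hkey
    linarith
  · calc ‖βτ - βhat‖ ≤ τ / (C * lam) * ‖βτ‖ := hβτ_bound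
      _ = τ * ‖βτ‖ / (C * lam) := div_mul_eq_mul_div _ _ _
      _ ≤ √(2 * τ) * √((1 / (n : ℝ)) * ∑ i, ρ (ε i)) / (C * lam) :=
        div_le_div_of_nonneg_right (mul_norm_le_sqrt_of_forall_Fobj_le τ X ε hρnonneg hτ hβτ)
          hClam.le
      _ = _ := mul_div_right_comm _ _ _

theorem statement18 {p n : ℕ} (ρ : ℝ → ℝ) (τ C : ℝ) (hτ : 0 < τ) (hC : 0 < C)
    (hρconv : ConvexOn ℝ Set.univ ρ) (hρsmooth : ContDiff ℝ 2 ρ)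
    (hρnonneg : ∀ x, 0 ≤ ρ x) (hρzero : ρ 0 = 0)
    -- ρ strongly convex with modulus C: ψ'(x) ≥ C for all x
    (hstrong : ∀ x : ℝ, C ≤ deriv (deriv ρ) x)
    (X : Fin n → EuclideanSpace ℝ (Fin p)) (ε : Fin n → ℝ)
    (hher : (sigmaHat X).IsHermitian)
    -- λ_min(Σ̂) > 0
    (hlmin : 0 < ⨅ j, hher.eigenvalues j)
    -- β̂ : the unpenalized M-estimator, Σᵢ Xᵢ ψ(εᵢ - Xᵢᵀβ̂) = 0
    (βhat : EuclideanSpace ℝ (Fin p))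
    (hβhat : ∑ i, deriv ρ (resid X ε βhat i) • X i = (0 : EuclideanSpace ℝ (Fin p)))
    -- β̂_τ : the ridge-penalized M-estimator (minimizer of the penalized objective)
    (βτ : EuclideanSpace ℝ (Fin p))
    (hβτ : ∀ β, Fobj ρ τ X ε βτ ≤ Fobj ρ τ X ε β) :
    ‖βτ - βhat‖ ≤ (τ / (C * (⨅ j, hher.eigenvalues j) + τ)) * ‖βhat‖ ∧
    ‖βτ - βhat‖ ≤ (τ / (C * (⨅ j, hher.eigenvalues j))) * ‖βτ‖ ∧
    ‖βτ - βhat‖ ≤ (Real.sqrt (2 * τ) / (C * (⨅ j, hher.eigenvalues j))) *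
      Real.sqrt ((1 / (n : ℝ)) * ∑ i, ρ (ε i)) :=
  statement18_general ρ τ C hτ hC hρsmooth hρnonneg hstrong X ε hher hlmin βhat hβhat βτ hβτ
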